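/- Let a > 0 and let f : ℝ → ℂ be a bounded continuous function. Then ∫_{−s}^{s} ( ∫_{{|x|>a}} |f(x+u)|² t(x,x+u)² π(x) dx )^{1/2} du ≤ β_a · ‖f‖_{L²(π)}, where β_a := ∫_{−s}^{s} sup_{|x|>a} √(t(x,x+u)·t(x+u,x)) du. -/

import Mathlib

open MeasureTheory Filter Topology

noncomputable section

/-- The probability measure on `ℝ` with density `π` w.r.t. Lebesgue measure. -/
def piMeas (π : ℝ → ℝ) : Measure ℝ := volume.withDensity fun x => ENNReal.ofReal (π x)

/-- `t(x,y) = min(q(x,y), π(y) q(y,x) / π(x))`. -/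
def mhT (π : ℝ → ℝ) (q : ℝ → ℝ → ℝ) (x y : ℝ) : ℝ := min (q x y) (π y * q y x / π x)

/-- The rejection probability `r(x) = 1 - ∫ t(x,y) dy`. -/
def mhR (π : ℝ → ℝ) (q : ℝ → ℝ → ℝ) (x : ℝ) : ℝ := 1 - ∫ y, mhT π q x y

/-!
Fix the shift `u` and write `β(u)` for the supremum in the statement. On `{|x| > a}` detailed
balance gives `t(x,x+u)² π(x) = t(x,x+u) t(x+u,x) π(x+u) ≤ β(u)² π(x+u)`, so by translation
invariance of Lebesgue measure the inner integral is at most `β(u)² ‖f‖²`. Take square roots and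
integrate over `u`; `β` is integrable, being bounded and lower semicontinuous as a supremum of
continuous functions, and only the larger integrand needs to be integrable.
-/

section mhT

variable {π : ℝ → ℝ} {q : ℝ → ℝ → ℝ}

lemma mhT_nonneg (hπ : ∀ x, 0 ≤ π x) (hq : ∀ x y, 0 ≤ q x y) (x y : ℝ) : 0 ≤ mhT π q x y :=
  le_min (hq x y) (div_nonneg (mul_nonneg (hπ y) (hq y x)) (hπ x))

lemma mhT_le {M : ℝ} (hq : ∀ x y, q x y ≤ M) (x y : ℝ) : mhT π q x y ≤ M :=
  (min_le_left _ _).trans (hq x y)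

lemma mhT_detailedBalance {x y : ℝ} (hx : 0 < π x) (hy : 0 < π y) :
    mhT π q x y * π x = mhT π q y x * π y := by
  unfold mhT
  rw [min_mul_of_nonneg _ _ hx.le, min_mul_of_nonneg _ _ hy.le, div_mul_cancel₀ _ hx.ne',
    div_mul_cancel₀ _ hy.ne', min_comm]
  ring_nf

lemma continuous_mhT (hπ : Continuous π) (hπ0 : ∀ x, π x ≠ 0)
    (hq : Continuous fun p : ℝ × ℝ => q p.1 p.2) :
    Continuous fun p : ℝ × ℝ => mhT π q p.1 p.2 :=
  hq.min (((hπ.comp continuous_snd).mul (hq.comp continuous_swap)).div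
    (hπ.comp continuous_fst) fun p => hπ0 p.1)

lemma sqrt_mhT_mul_mhT_le {M : ℝ} (hπ : ∀ x, 0 ≤ π x) (hq0 : ∀ x y, 0 ≤ q x y)
    (hqM : ∀ x y, q x y ≤ M) (x y : ℝ) : √(mhT π q x y * mhT π q y x) ≤ M := by
  have hM : 0 ≤ M := (hq0 x y).trans (hqM x y)
  refine Real.sqrt_le_iff.2 ⟨hM, ?_⟩
  calc mhT π q x y * mhT π q y x ≤ M * M :=
        mul_le_mul (mhT_le hqM x y) (mhT_le hqM y x) (mhT_nonneg hπ hq0 y x) hM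
    _ = M ^ 2 := (sq M).symm

lemma sqrt_setIntegral_mhT_sq_le (hπ : ∀ x, 0 < π x) (hq : ∀ x y, 0 ≤ q x y)
    {g : ℝ → ℝ} (hg0 : ∀ x, 0 ≤ g x) (hg : Integrable fun x => g x * π x)
    {A : Set ℝ} (hA : MeasurableSet A) {u c : ℝ} (hc0 : 0 ≤ c)
    (hc : ∀ x ∈ A, √(mhT π q x (x + u) * mhT π q (x + u) x) ≤ c) :
    √(∫ x in A, g (x + u) * mhT π q x (x + u) ^ 2 * π x) ≤ c * √(∫ x, g x * π x) := by
  have hπ0 : ∀ x, 0 ≤ π x := fun x => (hπ x).le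
  have hpt : ∀ x ∈ A, g (x + u) * mhT π q x (x + u) ^ 2 * π x
      ≤ c ^ 2 * (g (x + u) * π (x + u)) := by
    intro x hx
    have htt := (Real.sqrt_le_iff.1 (hc x hx)).2
    calc g (x + u) * mhT π q x (x + u) ^ 2 * π x
        = g (x + u) * (mhT π q x (x + u) * mhT π q (x + u) x) * π (x + u) := by
          linear_combination (g (x + u) * mhT π q x (x + u)) *
            mhT_detailedBalance (q := q) (hπ x) (hπ (x + u))
      _ ≤ g (x + u) * c ^ 2 * π (x + u) := by gcongr <;> simp only [hg0, hπ0]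
      _ = c ^ 2 * (g (x + u) * π (x + u)) := by ring
  have hint : Integrable fun x => c ^ 2 * (g (x + u) * π (x + u)) :=
    (hg.comp_add_right u).const_mul _
  have hint0 : ∀ x, 0 ≤ c ^ 2 * (g (x + u) * π (x + u)) := fun x => by
    have := hg0 (x + u); have := hπ0 (x + u); positivity
  calc √(∫ x in A, g (x + u) * mhT π q x (x + u) ^ 2 * π x)
      ≤ √(∫ x, c ^ 2 * (g (x + u) * π (x + u))) := by
        refine Real.sqrt_le_sqrt ((integral_mono_of_nonneg ?_ hint.integrableOn
          (ae_restrict_of_forall_mem hA hpt)).trans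
          (setIntegral_le_integral hint (ae_of_all _ hint0)))
        refine ae_of_all _ fun x => ?_
        have := hg0 (x + u); have := mhT_nonneg hπ0 hq x (x + u); have := hπ0 x
        positivity
    _ = c * √(∫ x, g x * π x) := by
        rw [integral_const_mul, integral_add_right_eq_self (fun x => g x * π x),
          Real.sqrt_mul (sq_nonneg c), Real.sqrt_sq hc0]

end mhT

lemma intervalIntegrable_sSup_image {α : Type*} {F : α → ℝ → ℝ} {M : ℝ}
    (hF : ∀ x, Continuous (F x)) (hF0 : ∀ x u, 0 ≤ F x u) (hFM : ∀ x u, F x u ≤ M)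
    (A : Set α) (a b : ℝ) :
    IntervalIntegrable (fun u => sSup ((fun x => F x u) '' A)) volume a b := by
  have hlsc : LowerSemicontinuous fun u => sSup ((fun x => F x u) '' A) := by
    simp only [sSup_image']
    exact lowerSemicontinuous_ciSup
      (fun u => ⟨M, Set.forall_mem_range.2 fun x => hFM x u⟩)
      fun x => (hF x).lowerSemicontinuous
  refine (intervalIntegrable_const (c := max M 0)).mono_fun'
    hlsc.measurable.aestronglyMeasurable (ae_of_all _ fun u => ?_)
  dsimp only
  rw [Real.norm_of_nonneg (Real.sSup_nonneg (Set.forall_mem_image.2 fun x _ => hF0 x u))]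
  exact Real.sSup_le (Set.forall_mem_image.2 fun x _ => (hFM x u).trans (le_max_left _ _))
    (le_max_right _ _)

theorem integral_le_beta_mul_norm_general
    (π : ℝ → ℝ) (hπpos : ∀ x, 0 < π x) (hπcont : Continuous π)
    (hπprob : ∫ x, π x = 1)
    (q : ℝ → ℝ → ℝ) (hqnn : ∀ x y, 0 ≤ q x y) (hqbdd : ∃ M, ∀ x y, q x y ≤ M)
    (hqcont : Continuous fun p : ℝ × ℝ => q p.1 p.2)
    (s : ℝ) (hs : 0 < s)
    (a : ℝ)
    (f : ℝ → ℂ) (hfcont : Continuous f) (hfbdd : ∃ M, ∀ x, ‖f x‖ ≤ M) :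
    (∫ u in (-s)..s,
        Real.sqrt (∫ x in {x : ℝ | a < |x|},
          ‖f (x + u)‖ ^ 2 * (mhT π q x (x + u)) ^ 2 * π x))
      ≤ (∫ u in (-s)..s,
          sSup ((fun x => Real.sqrt (mhT π q x (x + u) * mhT π q (x + u) x)) ''
            {x | a < |x|})) * Real.sqrt (∫ x, ‖f x‖ ^ 2 * π x) := by
  obtain ⟨M, hM⟩ := hqbdd
  obtain ⟨Mf, hMf⟩ := hfbdd
  have hπ0 : ∀ x, 0 ≤ π x := fun x => (hπpos x).le
  have hπint : Integrable π := .of_integral_ne_zero (by rw [hπprob]; exact one_ne_zero)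
  have hg : Integrable fun x => ‖f x‖ ^ 2 * π x :=
    hπint.bdd_mul (c := Mf ^ 2) (by fun_prop) (ae_of_all _ fun x => by
      rw [norm_pow, norm_norm]; exact pow_le_pow_left₀ (norm_nonneg _) (hMf x) 2)
  have htc := continuous_mhT hπcont (fun x => (hπpos x).ne') hqcont
  set β : ℝ → ℝ := fun u =>
    sSup ((fun x => √(mhT π q x (x + u) * mhT π q (x + u) x)) '' {x | a < |x|})
  have hβ : IntervalIntegrable β volume (-s) s :=
    intervalIntegrable_sSup_image (fun x => by fun_prop) (fun _ _ => Real.sqrt_nonneg _)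
      (fun x u => sqrt_mhT_mul_mhT_le hπ0 hqnn hM x (x + u)) _ _ _
  have hbound : ∀ u,
      √(∫ x in {x : ℝ | a < |x|}, ‖f (x + u)‖ ^ 2 * mhT π q x (x + u) ^ 2 * π x)
        ≤ β u * √(∫ x, ‖f x‖ ^ 2 * π x) := by
    intro u
    have hbdd : BddAbove ((fun x => √(mhT π q x (x + u) * mhT π q (x + u) x)) ''
        {x | a < |x|}) :=
      ⟨M, Set.forall_mem_image.2 fun x _ => sqrt_mhT_mul_mhT_le hπ0 hqnn hM x (x + u)⟩
    exact sqrt_setIntegral_mhT_sq_le hπpos hqnn (g := fun x => ‖f x‖ ^ 2)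
      (fun _ => by positivity) hg (isOpen_lt continuous_const continuous_abs).measurableSet
      (Real.sSup_nonneg (Set.forall_mem_image.2 fun _ _ => Real.sqrt_nonneg _))
      fun x hx => le_csSup hbdd (Set.mem_image_of_mem _ hx)
  rw [← intervalIntegral.integral_mul_const, intervalIntegral.integral_of_le (by linarith),
    intervalIntegral.integral_of_le (by linarith)]
  exact integral_mono_of_nonneg (ae_of_all _ fun _ => Real.sqrt_nonneg _)
    (hβ.1.mul_const _) (ae_of_all _ hbound)

theorem integral_le_beta_mul_norm
    (π : ℝ → ℝ) (hπpos : ∀ x, 0 < π x) (hπcont : Continuous π)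
    (hπprob : ∫ x, π x = 1)
    (q : ℝ → ℝ → ℝ) (hqnn : ∀ x y, 0 ≤ q x y) (hqbdd : ∃ M, ∀ x y, q x y ≤ M)
    (hqcont : Continuous fun p : ℝ × ℝ => q p.1 p.2) (hqprob : ∀ x, ∫ y, q x y = 1)
    (s : ℝ) (hs : 0 < s) (hrange : ∀ x u : ℝ, s < |u| → q x (x + u) = 0)
    (a : ℝ) (ha : 0 < a)
    (f : ℝ → ℂ) (hfcont : Continuous f) (hfbdd : ∃ M, ∀ x, ‖f x‖ ≤ M) :
    (∫ u in (-s)..s,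
        Real.sqrt (∫ x in {x : ℝ | a < |x|},
          ‖f (x + u)‖ ^ 2 * (mhT π q x (x + u)) ^ 2 * π x))
      ≤ (∫ u in (-s)..s,
          sSup ((fun x => Real.sqrt (mhT π q x (x + u) * mhT π q (x + u) x)) ''
            {x | a < |x|})) * Real.sqrt (∫ x, ‖f x‖ ^ 2 * π x) :=
  integral_le_beta_mul_norm_general π hπpos hπcont hπprob q hqnn hqbdd hqcont s hs a f hfcont hfbdd
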